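/- arXiv:1001.4332 — 6 statements merged into one kernel-verified Lean document; each statement's English description precedes it below -/
import Mathlib

section
/- Let n ≥ 4 be an integer and let E = EuclideanSpace ℝ (Fin n). Let S : E →ₗ[ℝ] E be a symmetric (self-adjoint) linear operator with trace τ, and let v ∈ E. Assume that for all x, y, u ∈ E: (1/(n−2)) * (⟪x,u⟫*⟪S y, v⟫ − ⟪x,v⟫*⟪S y, u⟫ + ⟪y,v⟫*⟪S x, u⟫ − ⟪y,u⟫*⟪S x, v⟫) − (τ/((n−1)*(n−2))) * (⟪x,u⟫*⟪y,v⟫ − ⟪x,v⟫*⟪y,u⟫) = 0. Then either v = 0, or S v = 0 and there exists c ∈ ℝ such that S w = c • w for every w ∈ E with ⟪w, v⟫ = 0. -/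
/-!
Testing the identity on `x = w`, `y = u = e`, with `e ≠ 0` orthogonal to `v` and `w` (it exists
since `dim ≥ 3`), shows that `S` maps `vᗮ` into `vᗮ`; testing it on `x = v` then shows that `S`
is a multiple `c` of the identity on `vᗮ`. By symmetry `v` is an eigenvector, `S v = l v`, and
`c = k - l`. Hence `τ = l + (n - 1) c = (n - 1) k - (n - 2) l`, and `τ = (n - 1) k` forces `l = 0`.
-/

open scoped RealInnerProductSpace
open Module

theorem exists_ne_zero_inner_eq_zero_of_two_lt_finrank {𝕜 E : Type*} [RCLike 𝕜]
    [NormedAddCommGroup E] [InnerProductSpace 𝕜 E] [FiniteDimensional 𝕜 E]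
    (hE : 2 < finrank 𝕜 E) (v w : E) :
    ∃ e : E, e ≠ 0 ∧ inner 𝕜 v e = 0 ∧ inner 𝕜 w e = 0 := by
  classical
  set K := Submodule.span 𝕜 ({v, w} : Set E)
  have hK : K ≠ ⊤ := by
    refine (span_lt_top_of_card_lt_finrank ?_).ne
    calc _ ≤ 2 := by simpa using Finset.card_le_two
      _ < _ := hE
  obtain ⟨e, he, he0⟩ :=
    Submodule.exists_mem_ne_zero_of_ne_bot (mt Submodule.orthogonal_eq_bot_iff.mp hK)
  exact ⟨e, he0, K.inner_right_of_mem_orthogonal (Submodule.subset_span (by simp)) he,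
    K.inner_right_of_mem_orthogonal (Submodule.subset_span (by simp)) he⟩

theorem eq_div_mul_of_one_div_mul_sub_eq_zero {a b τ p q : ℝ} (ha : a ≠ 0) (hb : b ≠ 0)
    (h : 1 / a * p - τ / (b * a) * q = 0) : p = τ / b * q := by
  field_simp at h ⊢
  linear_combination h

variable {E : Type*} [NormedAddCommGroup E] [InnerProductSpace ℝ E]

/-- `(n - 2) R(x, y, v, u) = 0` for the conformally flat curvature tensor `R` built from the Ricci
operator `S`, with `k = τ / (n - 1)`. -/
def ConformalCurvatureAnnihilates (S : E →ₗ[ℝ] E) (k : ℝ) (v : E) : Prop :=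
  ∀ x y u : E, ⟪x, u⟫ * ⟪S y, v⟫ - ⟪x, v⟫ * ⟪S y, u⟫ + ⟪y, v⟫ * ⟪S x, u⟫ - ⟪y, u⟫ * ⟪S x, v⟫
    = k * (⟪x, u⟫ * ⟪y, v⟫ - ⟪x, v⟫ * ⟪y, u⟫)

theorem LinearMap.trace_eq_add_mul_of_apply_eq_smul [FiniteDimensional ℝ E] {S : E →ₗ[ℝ] E}
    {v : E} {l c : ℝ} (hv : v ≠ 0) (hSv : S v = l • v) (hSw : ∀ w, ⟪w, v⟫ = 0 → S w = c • w) :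
    LinearMap.trace ℝ E S = l + (finrank ℝ E - 1 : ℝ) * c := by
  have hvv : ⟪v, v⟫ ≠ 0 := inner_self_ne_zero.mpr hv
  have hS : S = c • LinearMap.id + ((l - c) / ⟪v, v⟫) • (innerₛₗ ℝ v).smulRight v := by
    ext x
    set a := ⟪v, x⟫ / ⟪v, v⟫
    have hw : ⟪x - a • v, v⟫ = 0 := by
      rw [inner_sub_left, real_inner_smul_left, real_inner_comm]
      simp only [a]
      field_simp
      ring
    calc S x = a • S v + S (x - a • v) := by simp
      _ = _ := by
        rw [hSv, hSw _ hw]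
        simp only [LinearMap.add_apply, LinearMap.smul_apply, LinearMap.id_apply,
          LinearMap.smulRight_apply, innerₛₗ_apply_apply, a]
        field_simp
        module
  rw [hS]
  simp only [map_add, map_smul, LinearMap.trace_id, LinearMap.trace_smulRight,
    innerₛₗ_apply_apply, smul_eq_mul]
  field_simp
  ring

namespace ConformalCurvatureAnnihilates

variable [FiniteDimensional ℝ E] {S : E →ₗ[ℝ] E} {k : ℝ} {v : E}

theorem inner_apply_eq_zero (hA : ConformalCurvatureAnnihilates S k v)
    (hE : 2 < finrank ℝ E) {w : E} (hw : ⟪w, v⟫ = 0) : ⟪S w, v⟫ = 0 := by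
  obtain ⟨e, he0, hve, hwe⟩ := exists_ne_zero_inner_eq_zero_of_two_lt_finrank hE v w
  have h := hA w e e
  rw [hw, hwe, real_inner_comm v e, hve] at h
  have hee : ⟪e, e⟫ ≠ 0 := inner_self_ne_zero.mpr he0
  exact (mul_eq_zero.mp (by linear_combination -h : ⟪e, e⟫ * ⟪S w, v⟫ = 0)).resolve_left hee

theorem apply_eq_smul (hA : ConformalCurvatureAnnihilates S k v) (hE : 2 < finrank ℝ E)
    (hv : v ≠ 0) {w : E} (hw : ⟪w, v⟫ = 0) : S w = (k - ⟪S v, v⟫ / ⟪v, v⟫) • w := by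
  have hvv : ⟪v, v⟫ ≠ 0 := inner_self_ne_zero.mpr hv
  refine ext_inner_right ℝ fun u ↦ ?_
  have h := hA v w u
  rw [hw, hA.inner_apply_eq_zero hE hw] at h
  rw [real_inner_smul_left]
  field_simp
  linear_combination -h

theorem apply_self_eq_smul (hA : ConformalCurvatureAnnihilates S k v) (hS : S.IsSymmetric)
    (hE : 2 < finrank ℝ E) : S v = (⟪S v, v⟫ / ⟪v, v⟫) • v := by
  rcases eq_or_ne v 0 with rfl | hv
  · simp
  have hvv : ⟪v, v⟫ ≠ 0 := inner_self_ne_zero.mpr hv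
  set z := S v - (⟪S v, v⟫ / ⟪v, v⟫) • v
  have hzv : ⟪z, v⟫ = 0 := by
    simp only [z, inner_sub_left, real_inner_smul_left]
    field_simp
    ring
  have hzz : ⟪z, z⟫ = 0 := by
    calc ⟪z, z⟫ = ⟪S v, z⟫ - (⟪S v, v⟫ / ⟪v, v⟫) * ⟪v, z⟫ := by
          rw [inner_sub_left, real_inner_smul_left]
      _ = ⟪S z, v⟫ := by rw [real_inner_comm z v, hzv, hS, real_inner_comm]; ring
      _ = 0 := hA.inner_apply_eq_zero hE hzv
  exact sub_eq_zero.mp (inner_self_eq_zero.mp hzz)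

theorem apply_self_eq_zero (hA : ConformalCurvatureAnnihilates S k v)
    (hS : S.IsSymmetric) (hE : 2 < finrank ℝ E)
    (hk : (finrank ℝ E - 1 : ℝ) * k = LinearMap.trace ℝ E S) : S v = 0 := by
  rcases eq_or_ne v 0 with rfl | hv
  · simp
  have htrace := LinearMap.trace_eq_add_mul_of_apply_eq_smul hv (hA.apply_self_eq_smul hS hE)
    fun w hw ↦ hA.apply_eq_smul hE hv hw
  have hn : (finrank ℝ E - 2 : ℝ) ≠ 0 := by
    have : (2 : ℝ) < finrank ℝ E := by exact_mod_cast hE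
    linarith
  have hl : ⟪S v, v⟫ / ⟪v, v⟫ = 0 := by
    refine (mul_eq_zero.mp ?_).resolve_left hn
    linear_combination hk + htrace
  rw [hA.apply_self_eq_smul hS hE, hl, zero_smul]

end ConformalCurvatureAnnihilates

/-- Linear-algebraic content of the Proposition: if the conformally flat curvature
expression built from a symmetric operator `S` with trace `τ` annihilates `v`
(in the sense of the displayed identity), then either `v = 0`, or `S v = 0` and
`S` is a multiple of the identity on the orthogonal complement of `v`. -/
theorem stmt0 (n : ℕ) (hn : 4 ≤ n)
    (S : EuclideanSpace ℝ (Fin n) →ₗ[ℝ] EuclideanSpace ℝ (Fin n))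
    (hS : ∀ x y : EuclideanSpace ℝ (Fin n), ⟪S x, y⟫ = ⟪x, S y⟫)
    (τ : ℝ) (hτ : τ = LinearMap.trace ℝ (EuclideanSpace ℝ (Fin n)) S)
    (v : EuclideanSpace ℝ (Fin n))
    (hcond : ∀ x y u : EuclideanSpace ℝ (Fin n),
      (1 / ((n : ℝ) - 2)) * (⟪x, u⟫ * ⟪S y, v⟫ - ⟪x, v⟫ * ⟪S y, u⟫
        + ⟪y, v⟫ * ⟪S x, u⟫ - ⟪y, u⟫ * ⟪S x, v⟫)
      - (τ / (((n : ℝ) - 1) * ((n : ℝ) - 2))) *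
          (⟪x, u⟫ * ⟪y, v⟫ - ⟪x, v⟫ * ⟪y, u⟫) = 0) :
    v = 0 ∨ (S v = 0 ∧ ∃ c : ℝ, ∀ w : EuclideanSpace ℝ (Fin n),
      ⟪w, v⟫ = 0 → S w = c • w) := by
  rcases eq_or_ne v 0 with hv | hv
  · exact Or.inl hv
  have hn' : (4 : ℝ) ≤ n := by exact_mod_cast hn
  have hA : ConformalCurvatureAnnihilates S (τ / (n - 1)) v := fun x y u ↦
    eq_div_mul_of_one_div_mul_sub_eq_zero (by linarith) (by linarith) (hcond x y u)
  have hE : finrank ℝ (EuclideanSpace ℝ (Fin n)) = n := finrank_euclideanSpace_fin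
  have hk : ((finrank ℝ (EuclideanSpace ℝ (Fin n)) : ℝ) - 1) * (τ / (n - 1)) =
      LinearMap.trace ℝ _ S := by
    rw [hE, ← hτ]
    field_simp [show (n : ℝ) - 1 ≠ 0 by linarith]
  exact Or.inr ⟨hA.apply_self_eq_zero hS (by omega) hk, _,
    fun w hw ↦ hA.apply_eq_smul (by omega) hv hw⟩
end

section
/- Fix an integer n ≥ 4. Let λ : Fin n → ℝ, let a : Fin n → ℝ, and set t = (∑ i, λ i) / (n − 1). Assume that for all i, j in Fin n with i ≠ j one has (λ i + λ j − t) * a j = 0. Then either a = 0, or there exists k in Fin n such that λ k = 0, λ i = λ j for all i, j ≠ k, and ∑ i, λ i * (a i)^2 = 0. -/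
/-!
If `a k ≠ 0`, the equations with `j = k` force `λ i = t - λ k` for every `i ≠ k`. Summing, and using
`∑ λ = (n - 1) t`, gives `(n - 2) λ k = 0`, so `λ k = 0` and all other `λ i` equal `t`. If moreover
`a j ≠ 0` for some `j ≠ k`, the equation for a third index `m ∉ {j, k}` reads `t + t - t = 0`, so
every `λ j` with `a j ≠ 0` vanishes and `∑ λ i a_i² = 0`.
-/

open Finset

variable {ι : Type*} {lam a : ι → ℝ} {t : ℝ}

lemma lam_eq_sub_lam_of_ne_zero (hcond : ∀ i j, i ≠ j → (lam i + lam j - t) * a j = 0)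
    {i k : ι} (hk : a k ≠ 0) (hik : i ≠ k) : lam i = t - lam k := by
  have := (mul_eq_zero.mp (hcond i k hik)).resolve_right hk
  linarith

variable [Fintype ι]

lemma sum_eq_add_card_sub_one_mul {k : ι} {c : ℝ} (h : ∀ i, i ≠ k → lam i = c) :
    ∑ i, lam i = lam k + ((Fintype.card ι : ℝ) - 1) * c := by
  classical
  rw [← add_sum_erase _ lam (mem_univ k),
    sum_congr rfl fun i hi ↦ h i (ne_of_mem_erase hi), sum_const, nsmul_eq_mul,
    card_erase_of_mem (mem_univ k), card_univ, Nat.cast_pred (Fintype.card_pos_iff.mpr ⟨k⟩)]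

lemma lam_eq_zero_of_ne_zero (hcond : ∀ i j, i ≠ j → (lam i + lam j - t) * a j = 0)
    (hsum : ∑ i, lam i = ((Fintype.card ι : ℝ) - 1) * t) (hcard : (Fintype.card ι : ℝ) ≠ 2)
    {k : ι} (hk : a k ≠ 0) : lam k = 0 := by
  have hsplit := sum_eq_add_card_sub_one_mul fun i hi ↦ lam_eq_sub_lam_of_ne_zero hcond hk hi
  have : ((Fintype.card ι : ℝ) - 2) * lam k = 0 := by linear_combination hsplit - hsum
  exact (mul_eq_zero.mp this).resolve_left (sub_ne_zero.mpr hcard)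

lemma lam_mul_eq_zero (hcond : ∀ i j, i ≠ j → (lam i + lam j - t) * a j = 0)
    (hcard : 3 ≤ Fintype.card ι) {k : ι} (hk : lam k = 0) (hlam : ∀ i, i ≠ k → lam i = t)
    (j : ι) : lam j * a j = 0 := by
  by_cases hjk : j = k
  · rw [hjk, hk, zero_mul]
  by_cases hj : a j = 0
  · rw [hj, mul_zero]
  obtain ⟨m, hmj, hmk⟩ := ENat.exists_ne_ne_of_three_le
    (by rw [ENat.card_eq_coe_fintype_card]; exact_mod_cast hcard) j k
  have := (mul_eq_zero.mp (hcond m j hmj)).resolve_right hj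
  rw [hlam m hmk, hlam j hjk] at this
  rw [hlam j hjk, show t = 0 by linarith, zero_mul]

theorem stmt1 (n : ℕ) (hn : 4 ≤ n) (lam a : Fin n → ℝ)
    (t : ℝ) (ht : t = (∑ i, lam i) / ((n : ℝ) - 1))
    (hcond : ∀ i j : Fin n, i ≠ j → (lam i + lam j - t) * a j = 0) :
    a = 0 ∨ ∃ k : Fin n, lam k = 0 ∧
      (∀ i j : Fin n, i ≠ k → j ≠ k → lam i = lam j) ∧
      ∑ i, lam i * (a i) ^ 2 = 0 := by
  by_cases ha : a = 0
  · exact Or.inl ha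
  obtain ⟨k, hk⟩ := Function.ne_iff.mp ha
  have hn4 : (4 : ℝ) ≤ n := by exact_mod_cast hn
  have hsum : ∑ i, lam i = ((Fintype.card (Fin n) : ℝ) - 1) * t := by
    rw [Fintype.card_fin, ht, mul_div_cancel₀ _ (by linarith)]
  have hlamk : lam k = 0 :=
    lam_eq_zero_of_ne_zero hcond hsum (by rw [Fintype.card_fin]; linarith) hk
  have hlam : ∀ i, i ≠ k → lam i = t := fun i hi ↦ by
    rw [lam_eq_sub_lam_of_ne_zero hcond hk hi, hlamk, sub_zero]
  refine Or.inr ⟨k, hlamk, fun i j hi hj ↦ by rw [hlam i hi, hlam j hj], sum_eq_zero fun i _ ↦ ?_⟩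
  rw [sq, ← mul_assoc,
    lam_mul_eq_zero hcond (by rw [Fintype.card_fin]; omega) hlamk hlam i, zero_mul]
end

section
/- Fix an integer n ≥ 4. Let λ : Fin n → ℝ, let a : Fin n → ℝ, and set t = (∑ i, λ i) / (n − 1). Assume that for all i, j in Fin n with i ≠ j one has (λ i + λ j − t) * a j = 0. If there exist i ≠ j in Fin n with a i ≠ 0 and a j ≠ 0, then λ k = 0 for every k in Fin n. -/
section PairSums

variable {ι : Type*} {lam a : ι → ℝ} {t : ℝ}

lemma add_eq_of_mul_eq_zero (hcond : ∀ i j : ι, i ≠ j → (lam i + lam j - t) * a j = 0)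
    {k m : ι} (hkm : k ≠ m) (ham : a m ≠ 0) : lam k + lam m = t := by
  have := (mul_eq_zero.1 (hcond k m hkm)).resolve_right ham
  linarith

/-- The third index `k₀` forces `lam i = lam j`, after which every value is `t - lam i = lam i`. -/
lemma eq_of_forall_add_eq {i j k₀ : ι} (hij : i ≠ j)
    (hi : ∀ k, k ≠ i → lam k + lam i = t) (hj : ∀ k, k ≠ j → lam k + lam j = t)
    (hk₀i : k₀ ≠ i) (hk₀j : k₀ ≠ j) (k : ι) : lam k = lam i := by
  have hji : lam j = lam i := by linarith [hi k₀ hk₀i, hj k₀ hk₀j]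
  by_cases hki : k = i
  · rw [hki]
  · linarith [hi k hki, hi j hij.symm]

end PairSums

lemma Fintype.exists_ne_ne_of_three_le_card {ι : Type*} [Fintype ι] (h : 3 ≤ Fintype.card ι)
    (i j : ι) : ∃ k, k ≠ i ∧ k ≠ j := by
  classical
  have hcard : 1 < (Finset.univ.erase i).card := by
    rw [Finset.card_erase_of_mem (Finset.mem_univ i), Finset.card_univ]
    omega
  obtain ⟨k, hk, hkj⟩ := Finset.exists_mem_ne hcard j
  exact ⟨k, Finset.ne_of_mem_erase hk, hkj⟩

lemma eq_zero_of_two_mul_eq_mul_div {n c : ℝ} (hn : 2 < n) (h : 2 * c = n * c / (n - 1)) :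
    c = 0 := by
  rw [eq_div_iff (by linarith)] at h
  have : (n - 2) * c = 0 := by linarith
  exact (mul_eq_zero.1 this).resolve_left (by linarith)

theorem stmt2 (n : ℕ) (hn : 4 ≤ n) (lam a : Fin n → ℝ)
    (t : ℝ) (ht : t = (∑ i, lam i) / ((n : ℝ) - 1))
    (hcond : ∀ i j : Fin n, i ≠ j → (lam i + lam j - t) * a j = 0)
    (i j : Fin n) (hij : i ≠ j) (hai : a i ≠ 0) (haj : a j ≠ 0) :
    ∀ k : Fin n, lam k = 0 := by
  have hi : ∀ k, k ≠ i → lam k + lam i = t := fun k hk => add_eq_of_mul_eq_zero hcond hk hai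
  have hj : ∀ k, k ≠ j → lam k + lam j = t := fun k hk => add_eq_of_mul_eq_zero hcond hk haj
  obtain ⟨k₀, hk₀i, hk₀j⟩ := Fintype.exists_ne_ne_of_three_le_card (by rw [Fintype.card_fin]; omega) i j
  have hconst : ∀ k, lam k = lam i := eq_of_forall_add_eq hij hi hj hk₀i hk₀j
  have htwo : t = 2 * lam i := by linarith [hi j hij.symm, hconst j]
  have hsum : ∑ k, lam k = n * lam i := by simp [hconst]
  have hn2 : (2 : ℝ) < n := by exact_mod_cast (show 2 < n by omega)
  have hzero : lam i = 0 :=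
    eq_zero_of_two_mul_eq_mul_div hn2 (by rw [← htwo, ← hsum]; exact ht)
  intro k
  rw [hconst k, hzero]
end

section
/- Fix an integer n ≥ 4. Let λ : Fin n → ℝ, set t = (∑ i, λ i) / (n − 1), and let h : Fin n → Fin n → Fin n → ℝ be totally symmetric: h i j k = h j i k = h i k j for all i, j, k. Assume the semiparallelity equations: for all a, b, c, d, e in Fin n, (λ a + λ b − t) * (h c d b * δ a e − h c d a * δ b e − δ d b * h c a e + δ d a * h c b e − δ c b * h d a e + δ c a * h d b e) = 0, where δ i j = 1 if i = j and δ i j = 0 otherwise. If i, k in Fin n satisfy i ≠ k and h i i k ≠ 0, then λ j + λ k = t for every j in Fin n with j ≠ k. -/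
/-- Kronecker delta on `Fin n`, valued in `ℝ`. -/
def kdelta {n : ℕ} (i j : Fin n) : ℝ := if i = j then 1 else 0

lemma kdelta_self {n : ℕ} (i : Fin n) : kdelta i i = 1 := if_pos rfl

lemma kdelta_of_ne {n : ℕ} {i j : Fin n} (hij : i ≠ j) : kdelta i j = 0 := if_neg hij

lemma kdelta_nonneg {n : ℕ} (i j : Fin n) : 0 ≤ kdelta i j := by
  unfold kdelta
  split_ifs <;> norm_num

/-- The bracket of the semiparallelity equation at `(a, b, c, d, e) = (j, k, i, i, j)`. -/
lemma semiparallel_bracket_eq {n : ℕ} (h : Fin n → Fin n → Fin n → ℝ)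
    (hsym : ∀ i j k : Fin n, h i j k = h j i k ∧ h i j k = h i k j)
    {i j k : Fin n} (hik : i ≠ k) (hjk : j ≠ k) :
    h i i k * kdelta j j - h i i j * kdelta k j
        - kdelta i k * h i j j + kdelta i j * h i k j
        - kdelta i k * h i j j + kdelta i j * h i k j
      = (1 + 2 * kdelta i j) * h i i k := by
  rw [kdelta_self, kdelta_of_ne hjk.symm, kdelta_of_ne hik]
  by_cases hij : i = j
  · subst hij
    rw [kdelta_self, ← (hsym i i k).2]
    ring
  · rw [kdelta_of_ne hij]
    ring

theorem stmt5_general (n : ℕ) (lam : Fin n → ℝ)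
    (t : ℝ)
    (h : Fin n → Fin n → Fin n → ℝ)
    (hsym : ∀ i j k : Fin n, h i j k = h j i k ∧ h i j k = h i k j)
    (hsp : ∀ a b c d e : Fin n,
      (lam a + lam b - t) *
        (h c d b * kdelta a e - h c d a * kdelta b e
          - kdelta d b * h c a e + kdelta d a * h c b e
          - kdelta c b * h d a e + kdelta c a * h d b e) = 0)
    (i k : Fin n) (hik : i ≠ k) (hiik : h i i k ≠ 0) :
    ∀ j : Fin n, j ≠ k → lam j + lam k = t := by
  intro j hjk
  have hbracket := hsp j k i i j
  rw [semiparallel_bracket_eq h hsym hik hjk] at hbracket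
  have hfactor : (1 + 2 * kdelta i j) * h i i k ≠ 0 :=
    mul_ne_zero (by linarith [kdelta_nonneg i j]) hiik
  linarith [(mul_eq_zero.1 hbracket).resolve_right hfactor]

theorem stmt5 (n : ℕ) (hn : 4 ≤ n) (lam : Fin n → ℝ)
    (t : ℝ) (ht : t = (∑ i, lam i) / ((n : ℝ) - 1))
    (h : Fin n → Fin n → Fin n → ℝ)
    (hsym : ∀ i j k : Fin n, h i j k = h j i k ∧ h i j k = h i k j)
    (hsp : ∀ a b c d e : Fin n,
      (lam a + lam b - t) *
        (h c d b * kdelta a e - h c d a * kdelta b e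
          - kdelta d b * h c a e + kdelta d a * h c b e
          - kdelta c b * h d a e + kdelta c a * h d b e) = 0)
    (i k : Fin n) (hik : i ≠ k) (hiik : h i i k ≠ 0) :
    ∀ j : Fin n, j ≠ k → lam j + lam k = t :=
  stmt5_general n lam t h hsym hsp i k hik hiik
end

section
/- Fix an integer n ≥ 4. Let λ : Fin n → ℝ, set t = (∑ i, λ i) / (n − 1), and let h : Fin n → Fin n → Fin n → ℝ be totally symmetric: h i j k = h j i k = h i k j for all i, j, k. Assume the semiparallelity equations: for all a, b, c, d, e in Fin n, (λ a + λ b − t) * (h c d b * δ a e − h c d a * δ b e − δ d b * h c a e + δ d a * h c b e − δ c b * h d a e + δ c a * h d b e) = 0, where δ i j = 1 if i = j and δ i j = 0 otherwise. If there exist i, k in Fin n with i ≠ k and h i i k ≠ 0, then λ i = λ j for every j in Fin n with j ≠ k, and λ k = 0. -/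
open Finset

def Semiparallel {n : ℕ} (lam : Fin n → ℝ) (t : ℝ) (h : Fin n → Fin n → Fin n → ℝ) : Prop :=
  ∀ a b c d e : Fin n,
    (lam a + lam b - t) *
      (h c d b * kdelta a e - h c d a * kdelta b e
        - kdelta d b * h c a e + kdelta d a * h c b e
        - kdelta c b * h d a e + kdelta c a * h d b e) = 0

theorem Semiparallel.add_eq {n : ℕ} {lam : Fin n → ℝ} {t : ℝ} {h : Fin n → Fin n → Fin n → ℝ}
    (hsp : Semiparallel lam t h) {i k : Fin n} (hik : i ≠ k) (hsym : h i k i = h i i k)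
    (hiik : h i i k ≠ 0) {j : Fin n} (hjk : j ≠ k) : lam j + lam k = t := by
  have H := hsp j k i i j
  obtain ⟨m, hm, hH⟩ : ∃ m : ℝ, m ≠ 0 ∧ (lam j + lam k - t) * (m * h i i k) = 0 := by
    by_cases hij : i = j
    · subst hij
      refine ⟨3, three_ne_zero, ?_⟩
      simp only [kdelta, if_pos, if_neg hik, if_neg hik.symm, hsym] at H
      linarith
    · refine ⟨1, one_ne_zero, ?_⟩
      simp only [kdelta, if_pos, if_neg hij, if_neg hik, if_neg hjk.symm] at H
      linarith
  have := (mul_eq_zero.mp hH).resolve_right (mul_ne_zero hm hiik)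
  linarith

theorem eq_zero_of_forall_add_eq {ι : Type*} [Fintype ι] [DecidableEq ι] {lam : ι → ℝ} {t : ℝ}
    {k : ι} (hcard : Fintype.card ι ≠ 2) (hsum : ∑ j, lam j = (Fintype.card ι - 1) * t)
    (hpair : ∀ j ≠ k, lam j + lam k = t) : lam k = 0 := by
  have hcompl : ∑ j ∈ {k}ᶜ, lam j = (Fintype.card ι - 1) * (t - lam k) := by
    rw [sum_congr rfl fun j hj => eq_sub_of_add_eq (hpair j (by simpa using hj)), sum_const,
      card_compl, card_singleton, nsmul_eq_mul, Nat.cast_pred (Fintype.card_pos_iff.mpr ⟨k⟩)]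
  rw [Fintype.sum_eq_add_sum_compl k, hcompl] at hsum
  have : ((Fintype.card ι : ℝ) - 2) * lam k = 0 := by linarith
  refine (mul_eq_zero.mp this).resolve_left (sub_ne_zero.mpr ?_)
  exact_mod_cast hcard

theorem stmt6 (n : ℕ) (hn : 4 ≤ n) (lam : Fin n → ℝ)
    (t : ℝ) (ht : t = (∑ i, lam i) / ((n : ℝ) - 1))
    (h : Fin n → Fin n → Fin n → ℝ)
    (hsym : ∀ i j k : Fin n, h i j k = h j i k ∧ h i j k = h i k j)
    (hsp : ∀ a b c d e : Fin n,
      (lam a + lam b - t) *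
        (h c d b * kdelta a e - h c d a * kdelta b e
          - kdelta d b * h c a e + kdelta d a * h c b e
          - kdelta c b * h d a e + kdelta c a * h d b e) = 0)
    (i k : Fin n) (hik : i ≠ k) (hiik : h i i k ≠ 0) :
    (∀ j : Fin n, j ≠ k → lam i = lam j) ∧ lam k = 0 := by
  have hpair : ∀ j ≠ k, lam j + lam k = t :=
    fun j => Semiparallel.add_eq hsp hik (hsym i i k).2.symm hiik
  have hn' : (4 : ℝ) ≤ n := by exact_mod_cast hn
  have hsum : ∑ j, lam j = (Fintype.card (Fin n) - 1) * t := by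
    rw [Fintype.card_fin, ht]
    field_simp [show (n : ℝ) - 1 ≠ 0 by linarith]
  refine ⟨fun j hjk => by linarith [hpair i hik, hpair j hjk], ?_⟩
  exact eq_zero_of_forall_add_eq (by rw [Fintype.card_fin]; omega) hsum hpair
end

section
/- Fix an integer n ≥ 4. Let λ : Fin n → ℝ, set t = (∑ i, λ i) / (n − 1), and let h : Fin n → Fin n → Fin n → ℝ be totally symmetric: h i j k = h j i k = h i k j for all i, j, k. Assume the semiparallelity equations: for all a, b, c, d, e in Fin n, (λ a + λ b − t) * (h c d b * δ a e − h c d a * δ b e − δ d b * h c a e + δ d a * h c b e − δ c b * h d a e + δ c a * h d b e) = 0, where δ i j = 1 if i = j and δ i j = 0 otherwise. Assume moreover that h i i e = 0 for all i, e in Fin n, and that there exist pairwise distinct i, j, k in Fin n with h i j k ≠ 0. Then λ l = 0 for every l in Fin n. -/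
/-!
Every nonzero component `h i j k` forces `λ a + λ b = t` for many pairs: the semiparallelity
equation with `(a, b, c, d, e) = (p, q, p, p, r)` has bracket `2 h p q r`, and with
`(p, a, q, r, a)` it has bracket `-h q r p`. Applied to the three distinct indices of a nonzero
component this gives `λ i + λ j = λ i + λ k = λ j + λ k = t` and `λ i + λ a = t` for every other
`a`, so all `λ a = t / 2`. Taking the trace, `t = n t / (2 (n - 1))`, i.e. `(n - 2) t = 0`.
-/

def semiparallelTerm {n : ℕ} (h : Fin n → Fin n → Fin n → ℝ) (a b c d e : Fin n) : ℝ :=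
  h c d b * kdelta a e - h c d a * kdelta b e
    - kdelta d b * h c a e + kdelta d a * h c b e
    - kdelta c b * h d a e + kdelta c a * h d b e

section SemiparallelTerm

variable {n : ℕ} {lam : Fin n → ℝ} {t : ℝ} {h : Fin n → Fin n → Fin n → ℝ}

theorem semiparallelTerm_self_self (hdiag : ∀ i e : Fin n, h i i e = 0) {p q : Fin n}
    (hpq : p ≠ q) (r : Fin n) : semiparallelTerm h p q p p r = 2 * h p q r := by
  simp only [semiparallelTerm, kdelta, hdiag, if_neg hpq, if_pos]
  ring

theorem semiparallelTerm_of_ne {p q r a : Fin n} (hpq : p ≠ q) (hpr : p ≠ r) (hpa : p ≠ a)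
    (haq : a ≠ q) (har : a ≠ r) : semiparallelTerm h p a q r a = -h q r p := by
  simp only [semiparallelTerm, kdelta, if_neg hpa, if_neg haq.symm, if_neg har.symm,
    if_neg hpq.symm, if_neg hpr.symm, if_pos]
  ring

theorem add_eq_of_semiparallelTerm_ne_zero
    (hsp : ∀ a b c d e : Fin n, (lam a + lam b - t) * semiparallelTerm h a b c d e = 0)
    {a b c d e : Fin n} (hne : semiparallelTerm h a b c d e ≠ 0) : lam a + lam b = t :=
  sub_eq_zero.mp ((mul_eq_zero.mp (hsp a b c d e)).resolve_right hne)

end SemiparallelTerm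

theorem eq_zero_of_forall_eq_half {n : ℕ} (hn : n ≠ 2) {lam : Fin n → ℝ} {t : ℝ}
    (ht : t = (∑ i, lam i) / ((n : ℝ) - 1)) (hlam : ∀ l, lam l = t / 2) : t = 0 := by
  simp only [hlam, Finset.sum_const, Finset.card_univ, Fintype.card_fin, nsmul_eq_mul] at ht
  rcases eq_or_ne (n : ℝ) 1 with hn1 | hn1
  · simpa [hn1] using ht
  have hn2 : (n : ℝ) - 2 ≠ 0 := sub_ne_zero.mpr (by exact_mod_cast hn)
  rw [eq_div_iff (sub_ne_zero.mpr hn1)] at ht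
  have : t * ((n : ℝ) - 2) = 0 := by linarith
  exact (mul_eq_zero.mp this).resolve_right hn2

theorem stmt9 (n : ℕ) (hn : 4 ≤ n) (lam : Fin n → ℝ)
    (t : ℝ) (ht : t = (∑ i, lam i) / ((n : ℝ) - 1))
    (h : Fin n → Fin n → Fin n → ℝ)
    (hsym : ∀ i j k : Fin n, h i j k = h j i k ∧ h i j k = h i k j)
    (hsp : ∀ a b c d e : Fin n,
      (lam a + lam b - t) *
        (h c d b * kdelta a e - h c d a * kdelta b e
          - kdelta d b * h c a e + kdelta d a * h c b e
          - kdelta c b * h d a e + kdelta c a * h d b e) = 0)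
    (hdiag : ∀ i e : Fin n, h i i e = 0)
    (i j k : Fin n) (hij : i ≠ j) (hjk : j ≠ k) (hik : i ≠ k) (hijk : h i j k ≠ 0) :
    ∀ l : Fin n, lam l = 0 := by
  have hikj : h i k j ≠ 0 := by rwa [← (hsym i j k).2]
  have hjki : h j k i ≠ 0 := by rwa [(hsym j k i).2, (hsym j i k).1]
  have pair {p q : Fin n} (hpq : p ≠ q) (r : Fin n) (hpqr : h p q r ≠ 0) : lam p + lam q = t :=
    add_eq_of_semiparallelTerm_ne_zero hsp (c := p) (d := p) (e := r)
      (by simpa [semiparallelTerm_self_self hdiag hpq] using hpqr)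
  have hsum_ij : lam i + lam j = t := pair hij k hijk
  have hsum_ik : lam i + lam k = t := pair hik j hikj
  have hsum_jk : lam j + lam k = t := pair hjk i hjki
  have hhalf (a : Fin n) : lam a = t / 2 := by
    by_cases hai : a = i
    · subst hai; linarith
    by_cases haj : a = j
    · subst haj; linarith
    by_cases hak : a = k
    · subst hak; linarith
    have : lam i + lam a = t := add_eq_of_semiparallelTerm_ne_zero hsp (c := j) (d := k) (e := a)
      (by simpa [semiparallelTerm_of_ne hij hik (Ne.symm hai) haj hak] using hjki)
    linarith
  intro l
  rw [hhalf l, eq_zero_of_forall_eq_half (by omega) ht hhalf, zero_div]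
end
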